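/- Strong LP duality for the Benders subproblem: let A be a real m×n matrix, d ∈ ℝ^m, and c ∈ ℝ^n. If the primal feasible set {x ∈ ℝ^n | A x = d, x ≥ 0} is nonempty and the objective c · x is bounded below on it, and the dual feasible set {α ∈ ℝ^m | Aᵀ α ≤ c} is nonempty, then inf {c · x | A x = d, x ≥ 0} = sup {α · d | Aᵀ α ≤ c}. -/

import Mathlib

/-!
Weak duality gives `sup ≤ inf`. For the converse, take `γ` below the primal infimum. Then
`(d, γ)` is not of the form `(A x, c ⬝ᵥ x + s)` with `x, s ≥ 0`, and Farkas' lemma separates it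
from this finitely generated cone by a vector `(y, μ)` with `μ ≤ 0`. If `μ < 0`, rescaling `y`
gives a dual feasible point of value above `γ`; if `μ = 0`, `y` is an improving ray of the dual
feasible set. Farkas' lemma itself is Hahn–Banach separation from the cone, which is closed
because a linear image of the nonnegative orthant is a finite union of injective linear images
of faces of the orthant (a conic Carathéodory argument).
-/

open Matrix

theorem LinearMap.isClosed_image_of_injOn {F E : Type*}
    [AddCommGroup F] [Module ℝ F] [TopologicalSpace F] [IsTopologicalAddGroup F]
    [ContinuousSMul ℝ F] [T2Space F] [FiniteDimensional ℝ F]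
    [AddCommGroup E] [Module ℝ E] [TopologicalSpace E] [IsTopologicalAddGroup E]
    [ContinuousSMul ℝ E] [T2Space E]
    (f : F →ₗ[ℝ] E) {V : Submodule ℝ F} (hf : Set.InjOn f V) {K : Set F} (hK : IsClosed K)
    (hKV : K ⊆ V) : IsClosed (f '' K) := by
  have hemb : Topology.IsClosedEmbedding (f.domRestrict V) :=
    LinearMap.isClosedEmbedding_of_injective <| LinearMap.ker_eq_bot.mpr fun x y hxy =>
      Subtype.ext <| hf x.2 y.2 hxy
  have himage : f '' K = f.domRestrict V '' (Subtype.val ⁻¹' K) := by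
    ext y
    constructor
    · rintro ⟨x, hx, rfl⟩
      exact ⟨⟨x, hKV hx⟩, hx, rfl⟩
    · rintro ⟨x, hx, rfl⟩
      exact ⟨x, hx, rfl⟩
  rw [himage]
  exact hemb.isClosedMap _ (hK.preimage continuous_subtype_val)

section Orthant

variable {ι : Type*}

def orthantFace (s : Finset ι) : Set (ι → ℝ) := {x | 0 ≤ x ∧ ∀ i ∉ s, x i = 0}

theorem orthantFace_mono {s t : Finset ι} (hst : s ⊆ t) : orthantFace s ⊆ orthantFace t :=
  fun _ hx => ⟨hx.1, fun i hi => hx.2 i fun his => hi (hst his)⟩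

theorem isClosed_orthantFace (s : Finset ι) : IsClosed (orthantFace s) := by
  have : orthantFace s = Set.Ici 0 ∩ ⋂ i ∈ (↑s : Set ι)ᶜ, {x | x i = 0} := by
    ext x
    simp [orthantFace]
  rw [this]
  exact isClosed_Ici.inter <| isClosed_biInter fun i _ =>
    isClosed_eq (continuous_apply i) continuous_const

theorem orthantFace_univ [Fintype ι] : orthantFace (Finset.univ : Finset ι) = Set.Ici 0 := by
  ext x
  simp [orthantFace, Set.mem_Ici]

theorem exists_nonneg_sub_smul_eq_zero [Fintype ι] {x w : ι → ℝ} (hx : 0 ≤ x)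
    (hw : ∃ i, 0 < w i) : ∃ t : ℝ, ∃ i, 0 < w i ∧ 0 ≤ x - t • w ∧ (x - t • w) i = 0 := by
  classical
  obtain ⟨i, hi, hmin⟩ := Finset.exists_min_image ({j | 0 < w j} : Finset ι)
    (fun j => x j / w j) (by obtain ⟨i, hi⟩ := hw; exact ⟨i, by simpa using hi⟩)
  rw [Finset.mem_filter_univ] at hi
  refine ⟨x i / w i, i, hi, fun j => ?_, by simp [div_mul_cancel₀ _ hi.ne']⟩
  have ht : 0 ≤ x i / w i := div_nonneg (hx i) hi.le
  rcases lt_or_ge 0 (w j) with hj | hj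
  · have := (le_div_iff₀ hj).mp (hmin j (by simpa using hj))
    simpa using this
  · simpa using (mul_nonpos_of_nonneg_of_nonpos ht hj).trans (hx j)

variable {E : Type*} [AddCommGroup E] [Module ℝ E]

theorem image_orthantFace_subset_biUnion_erase [Fintype ι] [DecidableEq ι]
    (f : (ι → ℝ) →ₗ[ℝ] E) {s : Finset ι} {w : ι → ℝ} (hws : ∀ i ∉ s, w i = 0)
    (hfw : f w = 0) (hw : ∃ i, 0 < w i) :
    f '' orthantFace s ⊆ ⋃ i ∈ s, f '' orthantFace (s.erase i) := by
  rintro _ ⟨x, ⟨hx, hxs⟩, rfl⟩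
  obtain ⟨t, i, hwi, hnonneg, hzero⟩ := exists_nonneg_sub_smul_eq_zero hx hw
  have his : i ∈ s := by
    by_contra h
    exact hwi.ne' (hws i h)
  refine Set.mem_biUnion his ⟨x - t • w, ⟨hnonneg, fun j hj => ?_⟩, by simp [hfw]⟩
  by_cases hji : j = i
  · exact hji ▸ hzero
  · have hjs : j ∉ s := fun h => hj (Finset.mem_erase.mpr ⟨hji, h⟩)
    simp [hxs j hjs, hws j hjs]

variable [TopologicalSpace E] [IsTopologicalAddGroup E] [ContinuousSMul ℝ E] [T2Space E]

theorem isClosed_image_orthantFace [Fintype ι] (f : (ι → ℝ) →ₗ[ℝ] E) (s : Finset ι) :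
    IsClosed (f '' orthantFace s) := by
  classical
  induction s using Finset.strongInduction with
  | H s ih =>
  let V : Submodule ℝ (ι → ℝ) := Submodule.pi (↑s)ᶜ fun _ => ⊥
  by_cases hinj : ∀ w ∈ V, f w = 0 → w = 0
  · have hinjOn : Set.InjOn f V :=
      LinearMap.disjoint_ker_iff_injOn.mp (LinearMap.disjoint_ker.mpr hinj)
    exact f.isClosed_image_of_injOn hinjOn (isClosed_orthantFace s) fun x hx i hi => hx.2 i hi
  push Not at hinj
  obtain ⟨w, hwV, hfw, hw⟩ := hinj
  obtain ⟨w', hw'V, hfw', hw'⟩ : ∃ w' ∈ V, f w' = 0 ∧ ∃ i, 0 < w' i := by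
    obtain ⟨i, hi⟩ := Function.ne_iff.mp hw
    rcases hi.lt_or_gt with hneg | hpos
    · exact ⟨-w, neg_mem hwV, by simp [hfw], i, by simpa using hneg⟩
    · exact ⟨w, hwV, hfw, i, hpos⟩
  have hsplit : f '' orthantFace s = ⋃ i ∈ s, f '' orthantFace (s.erase i) :=
    (image_orthantFace_subset_biUnion_erase f hw'V hfw' hw').antisymm <|
      Set.iUnion₂_subset fun i _ => Set.image_mono (orthantFace_mono (s.erase_subset i))
  rw [hsplit]
  exact isClosed_biUnion_finset fun i hi => ih _ (Finset.erase_ssubset hi)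

end Orthant

theorem StrongDual.apply_eq_dotProduct {κ : Type*} [Fintype κ] [DecidableEq κ]
    (φ : StrongDual ℝ (κ → ℝ)) (z : κ → ℝ) : φ z = (fun i => φ (Pi.single i 1)) ⬝ᵥ z := by
  have := (φ : (κ → ℝ) →ₗ[ℝ] ℝ).pi_apply_eq_sum_univ z
  simp only [ContinuousLinearMap.coe_coe, smul_eq_mul] at this
  rw [this, dotProduct]
  refine Finset.sum_congr rfl fun i _ => ?_
  rw [mul_comm]
  congr 2
  ext j
  simp [Pi.single_apply, eq_comm]

theorem Matrix.farkas {κ ι : Type*} [Fintype κ] [Fintype ι] (M : Matrix κ ι ℝ) (b : κ → ℝ)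
    (h : ∀ x, 0 ≤ x → M *ᵥ x ≠ b) : ∃ y, Mᵀ *ᵥ y ≤ 0 ∧ 0 < y ⬝ᵥ b := by
  classical
  let C : ProperCone ℝ (κ → ℝ) :=
    { toSubmodule := (PointedCone.positive ℝ (ι → ℝ)).map M.mulVecLin
      isClosed' := by
        simpa [PointedCone.coe_map, ← orthantFace_univ] using
          isClosed_image_orthantFace M.mulVecLin Finset.univ }
  obtain ⟨φ, hφC, hφb⟩ :=
    C.hyperplane_separation_point (x₀ := b) fun ⟨x, hx, hxb⟩ => h x hx hxb
  rw [φ.apply_eq_dotProduct] at hφb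
  refine ⟨-fun i => φ (Pi.single i 1), fun j => ?_, by simpa using hφb⟩
  have := hφC (M *ᵥ Pi.single j 1) ⟨Pi.single j 1, Pi.single_nonneg.mpr zero_le_one, rfl⟩
  rw [φ.apply_eq_dotProduct, mulVec_single_one, dotProduct_comm] at this
  rw [mulVec_neg]
  exact neg_nonpos.mpr this

namespace Matrix

variable {κ ι : Type*} {A : Matrix κ ι ℝ} {d : κ → ℝ} {c : ι → ℝ}

theorem weak_duality [Fintype κ] [Fintype ι] {x : ι → ℝ} {α : κ → ℝ} (hx : A *ᵥ x = d)
    (hx_nonneg : 0 ≤ x) (hα : Aᵀ *ᵥ α ≤ c) : α ⬝ᵥ d ≤ c ⬝ᵥ x :=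
  calc α ⬝ᵥ d = Aᵀ *ᵥ α ⬝ᵥ x := by rw [← hx, dotProduct_mulVec, mulVec_transpose]
    _ ≤ c ⬝ᵥ x := dotProduct_le_dotProduct_of_nonneg_right hα hx_nonneg

def augmentObjective (A : Matrix κ ι ℝ) (c : ι → ℝ) : Matrix (κ ⊕ Unit) (ι ⊕ Unit) ℝ :=
  fromBlocks A 0 (replicateRow Unit c) 1

theorem augmentObjective_mulVec [Fintype ι] (x : ι ⊕ Unit → ℝ) :
    augmentObjective A c *ᵥ x =
      Sum.elim (A *ᵥ (x ∘ Sum.inl)) fun _ => c ⬝ᵥ (x ∘ Sum.inl) + x (Sum.inr ()) := by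
  ext (i | u) <;> simp [augmentObjective, fromBlocks_mulVec, replicateRow_mulVec_eq_const]

theorem augmentObjective_transpose_mulVec [Fintype κ] (y : κ ⊕ Unit → ℝ) :
    (augmentObjective A c)ᵀ *ᵥ y =
      Sum.elim (Aᵀ *ᵥ (y ∘ Sum.inl) + y (Sum.inr ()) • c) fun _ => y (Sum.inr ()) := by
  ext (j | u)
  · simp [augmentObjective, mulVec, dotProduct, mul_comm]
  · simp [augmentObjective, fromBlocks_transpose, fromBlocks_mulVec]

theorem exists_certificate_of_forall_lt_dotProduct [Fintype κ] [Fintype ι] {γ : ℝ}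
    (h : ∀ x, 0 ≤ x → A *ᵥ x = d → γ < c ⬝ᵥ x) :
    ∃ (y : κ → ℝ) (μ : ℝ), μ ≤ 0 ∧ Aᵀ *ᵥ y + μ • c ≤ 0 ∧ 0 < y ⬝ᵥ d + μ * γ := by
  obtain ⟨z, hz, hzb⟩ := farkas (augmentObjective A c) (Sum.elim d fun _ => γ)
    fun x hx hxb => by
      rw [augmentObjective_mulVec] at hxb
      have hAx : A *ᵥ (x ∘ Sum.inl) = d := funext fun i => congrFun hxb (Sum.inl i)
      have hobj : c ⬝ᵥ (x ∘ Sum.inl) + x (Sum.inr ()) = γ := congrFun hxb (Sum.inr ())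
      have hslack : 0 ≤ x (Sum.inr ()) := hx _
      linarith [h (x ∘ Sum.inl) (fun i => hx (Sum.inl i)) hAx]
  rw [augmentObjective_transpose_mulVec] at hz
  refine ⟨z ∘ Sum.inl, z (Sum.inr ()), hz (Sum.inr ()), fun j => hz (Sum.inl j), ?_⟩
  simpa [dotProduct] using hzb

theorem exists_dual_gt_of_ray [Fintype κ] [Fintype ι] {α₀ y : κ → ℝ} (hα₀ : Aᵀ *ᵥ α₀ ≤ c)
    (hy : Aᵀ *ᵥ y ≤ 0) (hyd : 0 < y ⬝ᵥ d) (γ : ℝ) : ∃ α, Aᵀ *ᵥ α ≤ c ∧ γ < α ⬝ᵥ d := by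
  obtain ⟨t, ht⟩ := exists_nat_gt ((γ - α₀ ⬝ᵥ d) / (y ⬝ᵥ d))
  refine ⟨α₀ + (t : ℝ) • y, ?_, ?_⟩
  · rw [mulVec_add, mulVec_smul]
    exact add_le_of_le_of_nonpos hα₀ (smul_nonpos_of_nonneg_of_nonpos t.cast_nonneg hy)
  · rw [add_dotProduct, smul_dotProduct, smul_eq_mul]
    linarith [(div_lt_iff₀ hyd).mp ht]

theorem exists_dual_gt_of_forall_lt_dotProduct [Fintype κ] [Fintype ι]
    (hdual : ∃ α₀, Aᵀ *ᵥ α₀ ≤ c) {γ : ℝ} (h : ∀ x, 0 ≤ x → A *ᵥ x = d → γ < c ⬝ᵥ x) :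
    ∃ α, Aᵀ *ᵥ α ≤ c ∧ γ < α ⬝ᵥ d := by
  obtain ⟨y, μ, hμ, hy, hyd⟩ := exists_certificate_of_forall_lt_dotProduct h
  rcases hμ.lt_or_eq with hμ | rfl
  · have hμ' : 0 < -μ := neg_pos.mpr hμ
    refine ⟨(-μ)⁻¹ • y, fun j => ?_, ?_⟩
    · have := hy j
      simp only [Pi.add_apply, Pi.smul_apply, smul_eq_mul, Pi.zero_apply] at this
      rw [mulVec_smul, Pi.smul_apply, smul_eq_mul, inv_mul_le_iff₀ hμ']
      linarith
    · rw [smul_dotProduct, smul_eq_mul, lt_inv_mul_iff₀ hμ']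
      linarith
  · obtain ⟨α₀, hα₀⟩ := hdual
    simp only [zero_smul, add_zero, zero_mul] at hy hyd
    exact exists_dual_gt_of_ray hα₀ hy hyd γ

end Matrix

/-- Strong LP duality for the Benders subproblem.  If the primal
feasible set `{x | A x = d, x ≥ 0}` is nonempty with `c·x` bounded below on it,
and the dual feasible set `{α | Aᵀ α ≤ c}` is nonempty, then
`inf {c·x | A x = d, x ≥ 0} = sup {α·d | Aᵀ α ≤ c}`. -/
theorem benders_strong_duality
    (m n : ℕ)
    (A : Matrix (Fin m) (Fin n) ℝ) (d : Fin m → ℝ) (c : Fin n → ℝ)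
    (hprimal : ∃ x : Fin n → ℝ, A.mulVec x = d ∧ ∀ i, 0 ≤ x i)
    (hbdd : BddBelow {v : ℝ | ∃ x : Fin n → ℝ,
        A.mulVec x = d ∧ (∀ i, 0 ≤ x i) ∧ v = c ⬝ᵥ x})
    (hdual : ∃ α : Fin m → ℝ, A.transpose.mulVec α ≤ c) :
    sInf {v : ℝ | ∃ x : Fin n → ℝ, A.mulVec x = d ∧ (∀ i, 0 ≤ x i) ∧ v = c ⬝ᵥ x}
      = sSup {w : ℝ | ∃ α : Fin m → ℝ, A.transpose.mulVec α ≤ c ∧ w = α ⬝ᵥ d} := by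
  set P := {v : ℝ | ∃ x : Fin n → ℝ, A.mulVec x = d ∧ (∀ i, 0 ≤ x i) ∧ v = c ⬝ᵥ x}
  set D := {w : ℝ | ∃ α : Fin m → ℝ, A.transpose.mulVec α ≤ c ∧ w = α ⬝ᵥ d}
  obtain ⟨x₀, hx₀, hx₀_nonneg⟩ := hprimal
  have hx₀P : c ⬝ᵥ x₀ ∈ P := ⟨x₀, hx₀, hx₀_nonneg, rfl⟩
  have weak : ∀ w ∈ D, ∀ v ∈ P, w ≤ v := by
    rintro _ ⟨α, hα, rfl⟩ _ ⟨x, hx, hx_nonneg, rfl⟩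
    exact weak_duality hx hx_nonneg hα
  have hDne : D.Nonempty := let ⟨α, hα⟩ := hdual; ⟨_, α, hα, rfl⟩
  refine le_antisymm (le_of_forall_lt fun γ hγ => ?_)
    (csSup_le hDne fun w hw => le_csInf ⟨_, hx₀P⟩ (weak w hw))
  obtain ⟨α, hα, hγα⟩ := exists_dual_gt_of_forall_lt_dotProduct hdual fun x hx_nonneg hx =>
    hγ.trans_le (csInf_le hbdd ⟨x, hx, hx_nonneg, rfl⟩)
  exact hγα.trans_le (le_csSup ⟨_, fun w hw => weak w hw _ hx₀P⟩ ⟨α, hα, rfl⟩)
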